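/- arXiv:2405.06123 — 2 statements merged into one kernel-verified Lean document; each statement's English description precedes it below -/
import Mathlib

section
/- For λ, μ > 0 and integers k ≥ j ≥ 1, the quantity (λμ/(λ+μ)²)^k · ((λ+μ)/λ)^j · (C(2k-j-1, k-1) - C(2k-j-1, k)), summed over k from j to ∞, equals (μ/λ)^j if λ > μ and equals 1 if λ ≤ μ. -/
/-!
Reindexing by `k = j + i`, the coefficients are the ballot numbers `ballot j i`, whose generating
function is `C(z) ^ j` for the Catalan generating function `C`. At `z = λμ/(λ+μ)²` the value
`C(z)` is the smaller root `r = (λ+μ)/max(λ,μ) ≤ 2` of `z r² = r - 1`, and the sum becomes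
`(z (λ+μ)/λ · r) ^ j`. Convergence of `C(z)` up to the boundary `z = 1/4` comes from the Catalan
recursion: it bounds the partial sums by `r`, and then forces the sum `s ≤ r` to be a root too.
Powers `j ≥ 2` follow from the Pascal recursion of the ballot numbers.
-/

open Finset

theorem catalan_eq_choose_sub_choose (n : ℕ) :
    (catalan n : ℝ) = ((2 * n).choose n : ℝ) - ((2 * n).choose (n + 1) : ℝ) := by
  have hcentral : ((n : ℝ) + 1) * catalan n = (2 * n).choose n := by
    exact_mod_cast succ_mul_catalan_eq_centralBinom n
  have hsucc : ((2 * n).choose (n + 1) : ℝ) * (n + 1) = (2 * n).choose n * (2 * n - n : ℕ) := by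
    exact_mod_cast Nat.choose_succ_right_eq (2 * n) n
  rw [show 2 * n - n = n by omega] at hsucc
  apply mul_left_cancel₀ (show (n : ℝ) + 1 ≠ 0 by positivity)
  linear_combination hcentral + hsucc

/-- The number of simple walks from height `j` that first reach `0` after `j + 2 * i` steps.
Truncated subtraction makes `ballot 0 = 0`. -/
def ballot (j i : ℕ) : ℝ :=
  ((j + 2 * i - 1).choose (j + i - 1) : ℝ) - ((j + 2 * i - 1).choose (j + i) : ℝ)

theorem ballot_zero_left (i : ℕ) : ballot 0 i = 0 := by
  rcases i with _ | i
  · simp [ballot]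
  · rw [ballot, sub_eq_zero, ← Nat.choose_symm_of_eq_add]
    omega

theorem ballot_one (i : ℕ) : ballot 1 i = catalan i := by
  rw [ballot, catalan_eq_choose_sub_choose]
  congr 3 <;> omega

theorem ballot_succ_zero (j : ℕ) : ballot (j + 1) 0 = 1 := by
  simp [ballot]

theorem ballot_add_two (j i : ℕ) :
    ballot (j + 2) i = ballot (j + 1) (i + 1) - ballot j (i + 1) := by
  have hpascal (k : ℕ) : ((j + 2 * i + 2).choose (k + 1) : ℝ)
      = (j + 2 * i + 1).choose k + (j + 2 * i + 1).choose (k + 1) := by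
    exact_mod_cast Nat.choose_succ_succ _ _
  rw [ballot, ballot, ballot, show j + 2 + 2 * i - 1 = j + 2 * i + 1 by omega,
    show j + 1 + 2 * (i + 1) - 1 = j + 2 * i + 2 by omega,
    show j + 2 * (i + 1) - 1 = j + 2 * i + 1 by omega, show j + 2 + i - 1 = j + i + 1 by omega,
    show j + 1 + (i + 1) - 1 = j + i + 1 by omega, show j + (i + 1) - 1 = j + i by omega,
    show j + 1 + (i + 1) = j + i + 1 + 1 by omega, show j + 2 + i = j + i + 1 + 1 by omega,
    show j + (i + 1) = j + i + 1 by omega, hpascal, hpascal]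
  ring

theorem sum_range_sum_antidiagonal_le_sq {R : Type*} [CommSemiring R] [PartialOrder R]
    [IsOrderedRing R] {a : ℕ → R} (ha : ∀ n, 0 ≤ a n) (N : ℕ) :
    ∑ n ∈ range N, ∑ p ∈ antidiagonal n, a p.1 * a p.2 ≤ (∑ n ∈ range N, a n) ^ 2 :=
  calc ∑ n ∈ range N, ∑ p ∈ antidiagonal n, a p.1 * a p.2
      = ∑ m ∈ range N, ∑ k ∈ range (N - m), a m * a k := by
        simp only [Nat.sum_antidiagonal_eq_sum_range_succ (fun p q => a p * a q)]
        exact sum_range_diag_flip N fun p q => a p * a q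
    _ ≤ ∑ m ∈ range N, ∑ k ∈ range N, a m * a k := by
        gcongr with m hm
        · exact fun k _ _ => mul_nonneg (ha m) (ha k)
        · exact Nat.sub_le N m
    _ = (∑ n ∈ range N, a n) ^ 2 := by rw [sq, sum_mul_sum]

theorem catalan_succ_mul_pow {R : Type*} [CommSemiring R] (z : R) (n : ℕ) :
    catalan (n + 1) * z ^ (n + 1)
      = z * ∑ p ∈ antidiagonal n, (catalan p.1 * z ^ p.1) * (catalan p.2 * z ^ p.2) := by
  rw [catalan_succ', Nat.cast_sum, sum_mul, mul_sum]
  refine sum_congr rfl fun p hp => ?_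
  rw [← mem_antidiagonal.mp hp]
  push_cast
  ring

section CatalanSeries

variable {z r : ℝ} (hz : 0 ≤ z) (hroot : z * r ^ 2 = r - 1)
include hz hroot

theorem one_le_of_mul_sq_eq_sub_one : 1 ≤ r := by
  nlinarith [mul_nonneg hz (sq_nonneg r)]

theorem sum_range_catalan_mul_pow_le (N : ℕ) : ∑ n ∈ range N, catalan n * z ^ n ≤ r := by
  have hr := one_le_of_mul_sq_eq_sub_one hz hroot
  induction N with
  | zero => rw [sum_range_zero]; linarith
  | succ N ih =>
    have hnonneg : 0 ≤ ∑ n ∈ range N, (catalan n : ℝ) * z ^ n := by positivity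
    have hsq := sum_range_sum_antidiagonal_le_sq (a := fun n => (catalan n : ℝ) * z ^ n)
      (fun n => by positivity) N
    calc ∑ n ∈ range (N + 1), (catalan n : ℝ) * z ^ n
        = z * ∑ n ∈ range N, ∑ p ∈ antidiagonal n,
            (catalan p.1 * z ^ p.1) * (catalan p.2 * z ^ p.2) + 1 := by
          simp [sum_range_succ', catalan_succ_mul_pow, mul_sum]
      _ ≤ z * r ^ 2 + 1 := by gcongr; exact hsq.trans (pow_le_pow_left₀ hnonneg ih 2)
      _ = r := by linarith

theorem hasSum_catalan_mul_pow (hr : r ≤ 2) : HasSum (fun n => catalan n * z ^ n) r := by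
  have hsum : Summable (fun n => (catalan n : ℝ) * z ^ n) :=
    summable_of_sum_range_le (fun n => by positivity) (sum_range_catalan_mul_pow_le hz hroot)
  set s := ∑' n, (catalan n : ℝ) * z ^ n
  have hs_le : s ≤ r :=
    Real.tsum_le_of_sum_range_le (fun n => by positivity) (sum_range_catalan_mul_pow_le hz hroot)
  have hnorm : Summable (fun n => ‖(catalan n : ℝ) * z ^ n‖) := hsum.abs
  have hprod : HasSum (fun n => ∑ p ∈ antidiagonal n,
      (catalan p.1 * z ^ p.1) * (catalan p.2 * z ^ p.2 : ℝ)) (s * s) := by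
    rw [tsum_mul_tsum_eq_tsum_sum_antidiagonal_of_summable_norm hnorm hnorm]
    exact (summable_norm_sum_mul_antidiagonal_of_summable_norm hnorm hnorm).of_norm.hasSum
  have hshift : HasSum (fun n => (catalan (n + 1) : ℝ) * z ^ (n + 1)) (s - 1) := by
    simpa using (hasSum_nat_add_iff' 1).mpr hsum.hasSum
  have hs_root : z * s ^ 2 = s - 1 := by
    rw [sq]
    refine (hprod.mul_left z).unique ?_
    simpa only [catalan_succ_mul_pow] using hshift
  have hs_eq : s = r := by
    have hr := one_le_of_mul_sq_eq_sub_one hz hroot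
    rcases mul_eq_zero.mp (show (s - r) * (z * (s + r) - 1) = 0 by
      linear_combination hs_root - hroot) with h | h
    · linarith
    · have hzrs : z * r * s = 1 := by linear_combination r * h - hroot
      nlinarith [mul_nonneg (mul_nonneg hz (by linarith : (0 : ℝ) ≤ r)) (sub_nonneg.2 hs_le)]
  exact hs_eq ▸ hsum.hasSum

end CatalanSeries

section BallotSeries

variable {z r : ℝ} (hz : 0 < z) (hr : r ≤ 2) (hroot : z * r ^ 2 = r - 1)
include hz hr hroot

/-- Stated for the tail `i ≥ 1` so that it also holds at `j = 0`, which starts the recursion. -/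
theorem hasSum_ballot_succ_mul_pow_succ (j : ℕ) :
    HasSum (fun i => ballot j (i + 1) * z ^ (i + 1)) (r ^ j - 1) := by
  induction j using Nat.twoStepInduction with
  | zero => simp [ballot_zero_left, hasSum_zero]
  | one =>
    simpa [ballot_one] using (hasSum_nat_add_iff' 1).mpr (hasSum_catalan_mul_pow hz.le hroot hr)
  | more j hj hj1 =>
    have hsum : HasSum (fun i => z * (ballot (j + 2) i * z ^ i)) (z * r ^ (j + 2)) := by
      have hterm (i : ℕ) : z * (ballot (j + 2) i * z ^ i)
          = ballot (j + 1) (i + 1) * z ^ (i + 1) - ballot j (i + 1) * z ^ (i + 1) := by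
        rw [ballot_add_two]
        ring
      simp only [hterm, show z * r ^ (j + 2) = r ^ (j + 1) - 1 - (r ^ j - 1) by
        linear_combination r ^ j * hroot]
      exact hj1.sub hj
    simpa [ballot_succ_zero] using
      (hasSum_nat_add_iff' 1).mpr ((hasSum_mul_left_iff hz.ne').mp hsum)

theorem hasSum_ballot_mul_pow {j : ℕ} (hj : 1 ≤ j) :
    HasSum (fun i => ballot j i * z ^ i) (r ^ j) := by
  obtain ⟨j, rfl⟩ := Nat.exists_eq_add_of_le' hj
  rw [← hasSum_nat_add_iff' 1]
  simpa [ballot_succ_zero] using hasSum_ballot_succ_mul_pow_succ hz hr hroot (j + 1)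

theorem hasSum_pow_mul_choose_sub_choose {j : ℕ} (hj : 1 ≤ j) (c : ℝ) :
    HasSum (fun i : ℕ => z ^ (j + i) * c ^ j *
        ((Nat.choose (2 * (j + i) - j - 1) ((j + i) - 1) : ℝ) -
          (Nat.choose (2 * (j + i) - j - 1) (j + i) : ℝ))) ((z * c * r) ^ j) := by
  have hterm (i : ℕ) : z ^ (j + i) * c ^ j *
      ((Nat.choose (2 * (j + i) - j - 1) ((j + i) - 1) : ℝ) -
        (Nat.choose (2 * (j + i) - j - 1) (j + i) : ℝ)) = (z * c) ^ j * (ballot j i * z ^ i) := by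
    rw [ballot, show 2 * (j + i) - j - 1 = j + 2 * i - 1 by omega]
    ring
  simp only [hterm, mul_pow (z * c) r]
  exact (hasSum_ballot_mul_pow hz hr hroot hj).mul_left _

end BallotSeries

theorem stmt_1 (lam mu : ℝ) (j : ℕ) (hj : 1 ≤ j) (hlam : 0 < lam) (hmu : 0 < mu) :
    (mu < lam →
      (∑' i : ℕ, (lam * mu / (lam + mu) ^ 2) ^ (j + i) * ((lam + mu) / lam) ^ j *
        ((Nat.choose (2 * (j + i) - j - 1) ((j + i) - 1) : ℝ) -
          (Nat.choose (2 * (j + i) - j - 1) (j + i) : ℝ))) = (mu / lam) ^ j) ∧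
    (lam ≤ mu →
      (∑' i : ℕ, (lam * mu / (lam + mu) ^ 2) ^ (j + i) * ((lam + mu) / lam) ^ j *
        ((Nat.choose (2 * (j + i) - j - 1) ((j + i) - 1) : ℝ) -
          (Nat.choose (2 * (j + i) - j - 1) (j + i) : ℝ))) = 1) := by
  set z := lam * mu / (lam + mu) ^ 2 with hz_def
  have hz : 0 < z := by positivity
  have hseries (r : ℝ) (hr : r ≤ 2) (hroot : z * r ^ 2 = r - 1) :=
    (hasSum_pow_mul_choose_sub_choose hz hr hroot hj ((lam + mu) / lam)).tsum_eq
  constructor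
  · intro hlt
    rw [hseries ((lam + mu) / lam) (by rw [div_le_iff₀ hlam]; linarith)
      (by rw [hz_def]; field_simp; ring)]
    congr 1
    rw [hz_def]
    field_simp
  · intro hle
    rw [hseries ((lam + mu) / mu) (by rw [div_le_iff₀ hmu]; linarith)
      (by rw [hz_def]; field_simp; ring), ← one_pow j]
    congr 1
    rw [hz_def]
    field_simp
end

section
/- Let λ, μ > 0 with λ ≠ μ. The function f(t) = -(λ+μ)/(λ-μ) + 2λt/(e^{(λ-μ)t} - 1) (extended continuously at t = 0 by f(0) = -(λ+μ)/(λ-μ) + 2λ/(λ-μ)) is strictly decreasing on [0,∞). -/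
open Real Set

private lemma H_pos (x : ℝ) : 0 < (if x = 0 then 1 else (Real.exp x - 1) / x) := by
  rcases eq_or_ne x 0 with h | h
  · simp [h]
  · rw [if_neg h]
    rcases lt_or_gt_of_ne h with hx | hx
    · exact div_pos_of_neg_of_neg (by simp [Real.exp_lt_one_iff.2 hx]) hx
    · have := Real.add_one_lt_exp h
      exact div_pos (by linarith) hx

private lemma H_strictMono : StrictMono (fun x : ℝ => if x = 0 then 1 else (Real.exp x - 1) / x) := by
  intro x y hxy
  dsimp only
  have hexp : StrictConvexOn ℝ univ Real.exp := strictConvexOn_exp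
  have key : ∀ z : ℝ, z ≠ 0 → (if z = 0 then (1:ℝ) else (Real.exp z - 1) / z)
      = (Real.exp z - Real.exp 0) / (z - 0) := by
    intro z hz; simp [hz, Real.exp_zero]
  rcases eq_or_ne x 0 with hx | hx
  · -- x = 0, y > 0
    subst hx
    have hy : y ≠ 0 := ne_of_gt hxy
    rw [if_pos rfl, key y hy]
    rw [lt_div_iff₀ (by simpa using hxy)]
    have := Real.add_one_lt_exp hy
    simp; linarith
  rcases eq_or_ne y 0 with hy | hy
  · subst hy
    rw [if_pos rfl, key x hx]
    rw [div_lt_iff_of_neg (by simpa using lt_of_le_of_ne (le_of_lt hxy) hx)]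
    have := Real.add_one_lt_exp hx
    simp; linarith
  · rw [key x hx, key y hy]
    exact hexp.secant_strict_mono (mem_univ 0) (mem_univ x) (mem_univ y) hx hy hxy

private lemma G_strictAnti : StrictAnti (fun x : ℝ => if x = 0 then 1 else x / (Real.exp x - 1)) := by
  have hG : ∀ x : ℝ, (if x = 0 then (1:ℝ) else x / (Real.exp x - 1))
      = 1 / (if x = 0 then 1 else (Real.exp x - 1) / x) := by
    intro x
    rcases eq_or_ne x 0 with h | h
    · simp [h]
    · rw [if_neg h, if_neg h, one_div, inv_div]
  intro x y hxy
  simp only [hG]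
  exact one_div_lt_one_div_of_lt (H_pos x) (H_strictMono hxy)

theorem stmt_10 (lam mu : ℝ) (hlam : 0 < lam) (hmu : 0 < mu) (hne : lam ≠ mu) :
    StrictAntiOn (fun t : ℝ =>
      if t = 0 then -(lam + mu) / (lam - mu) + 2 * lam / (lam - mu)
      else -(lam + mu) / (lam - mu) + 2 * lam * t / (exp ((lam - mu) * t) - 1))
      (Ici 0) := by
  set a := lam - mu with ha
  have ha0 : a ≠ 0 := sub_ne_zero.2 hne
  have hrw : ∀ t : ℝ,
      (if t = 0 then -(lam + mu) / a + 2 * lam / a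
       else -(lam + mu) / a + 2 * lam * t / (exp (a * t) - 1))
      = -(lam + mu) / a + (2 * lam / a) *
        (if a * t = 0 then 1 else (a * t) / (Real.exp (a * t) - 1)) := by
    intro t
    rcases eq_or_ne t 0 with h | h
    · simp [h]
    · have hat : a * t ≠ 0 := mul_ne_zero ha0 h
      have hE : Real.exp (a * t) - 1 ≠ 0 := by
        intro hE
        exact hat ((Real.exp_eq_one_iff _).1 (by linarith))
      rw [if_neg h, if_neg hat]
      field_simp
  intro s hs t ht hst
  simp only [hrw]
  have hG := G_strictAnti
  rcases lt_or_gt_of_ne ha0 with hlt | hgt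
  · -- a < 0 : a*t < a*s, so G(a*s) < G(a*t); coefficient 2*lam/a < 0
    have h1 : a * t < a * s := by nlinarith
    have h2 := hG h1
    have hc : 2 * lam / a < 0 := div_neg_of_pos_of_neg (by linarith) hlt
    nlinarith [hG h1]
  · -- a > 0 : a*s < a*t, so G(a*t) < G(a*s); coefficient > 0
    have h1 : a * s < a * t := by nlinarith
    have hc : 0 < 2 * lam / a := div_pos (by linarith) hgt
    nlinarith [hG h1]
end
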